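/- arXiv:2605.10837 — 4 statements merged into one kernel-verified Lean document; each statement's English description precedes it below -/
import Mathlib

section
/- Let A₁ ≤ A₂ ≤ A₃, C₁ ≤ C₂ ≤ C₃, 0 ≤ B₁ ≤ B₂ ≤ B₃ be real numbers with A₁+A₂+A₃ = C₁+C₂+C₃, satisfying (B₂+B₃)² ≤ η(A₁+A₂)(C₁+C₂) and C₂+C₃ ≤ μ(C₁+C₂) for constants μ-1 ≥ η ≥ 0 and μ > 1, with A₁+A₂ ≥ 0, C₁+C₂ ≥ 0, and suppose A₂+A₃ = μ(A₁+A₂). Then μ(A₁+A₂)(2A₃+A₁) - [(A₂+A₃)A₃ + 2(A₂+A₃)A₁ + (B₂+B₃)²] ≥ 0. -/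
/-- Algebraic inequality in the null-vector condition for the second cone inequality. -/
theorem stmt_4 (A1 A2 A3 C1 C2 C3 B1 B2 B3 η μ : ℝ)
    (hA : A1 ≤ A2 ∧ A2 ≤ A3) (hC : C1 ≤ C2 ∧ C2 ≤ C3)
    (hB : 0 ≤ B1 ∧ B1 ≤ B2 ∧ B2 ≤ B3)
    (htr : A1 + A2 + A3 = C1 + C2 + C3)
    (h1 : (B2 + B3) ^ 2 ≤ η * ((A1 + A2) * (C1 + C2)))
    (h3 : C2 + C3 ≤ μ * (C1 + C2))
    (hη : 0 ≤ η) (hημ : η ≤ μ - 1) (hμ : 1 < μ)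
    (hX : 0 ≤ A1 + A2) (hY : 0 ≤ C1 + C2)
    (hbdry : A2 + A3 = μ * (A1 + A2)) :
    0 ≤ μ * ((A1 + A2) * (2 * A3 + A1))
      - ((A2 + A3) * A3 + 2 * (A2 + A3) * A1 + (B2 + B3) ^ 2) := by
  obtain ⟨hA12, hA23⟩ := hA
  obtain ⟨hC12, hC23⟩ := hC
  -- C1 + C2 ≤ A2 + A3
  have hCC : C1 + C2 ≤ A2 + A3 := by nlinarith [hC12, hC23, hA12, hA23]
  have h2 : (B2 + B3) ^ 2 ≤ (μ - 1) * ((A1 + A2) * (C1 + C2)) := by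
    calc (B2 + B3) ^ 2 ≤ η * ((A1 + A2) * (C1 + C2)) := h1
    _ ≤ (μ - 1) * ((A1 + A2) * (C1 + C2)) := by
        apply mul_le_mul_of_nonneg_right hημ (mul_nonneg hX hY)
  nlinarith [mul_le_mul_of_nonneg_left hCC (mul_nonneg (by linarith : (0:ℝ) ≤ μ - 1) hX)]
end

section
/- Let (M⁴, g) be a Riemannian 4-manifold with nonnegative scalar curvature ℛ ≥ 0, whose curvature operator satisfies (B₂+B₃)² ≤ η(A₁+A₂)(C₁+C₂) for some 0 ≤ η < 9/16, where A₁ ≤ A₂ ≤ A₃, C₁ ≤ C₂ ≤ C₃ are the eigenvalues of the self-dual and anti-self-dual blocks and 0 ≤ B₁ ≤ B₂ ≤ B₃ are the singular values of the off-diagonal block, with A₁+A₂ ≥ 0 and C₁+C₂ ≥ 0. Then Ric ≥ (1 - (4/3)√η)(ℛ/4) g ≥ 0. -/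
open Finset

set_option maxHeartbeats 1000000

/-- Ricci pinching (Lemma 5.6): a 4-manifold with ℛ ≥ 0 whose curvature operator
satisfies (B₂+B₃)² ≤ η(A₁+A₂)(C₁+C₂) with 0 ≤ η < 9/16 has
Ric ≥ (1 - (4/3)√η)(ℛ/4) g ≥ 0.  The curvature data is encoded by the eigenvalues
A_i, C_i of the self-dual and anti-self-dual blocks (with tr A = tr C = ℛ/4), the
singular values B_i of the off-diagonal block, and the identity |Ric̊|² = 4|B|². -/
theorem stmt_7 (Ric : Fin 4 → Fin 4 → ℝ) (hsymm : ∀ i j, Ric i j = Ric j i)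
    (R : ℝ) (hR : R = ∑ i : Fin 4, Ric i i) (hRpos : 0 ≤ R)
    (A1 A2 A3 C1 C2 C3 B1 B2 B3 η : ℝ)
    (hA : A1 ≤ A2 ∧ A2 ≤ A3) (hC : C1 ≤ C2 ∧ C2 ≤ C3)
    (hB : 0 ≤ B1 ∧ B1 ≤ B2 ∧ B2 ≤ B3)
    (htrA : A1 + A2 + A3 = R / 4) (htrC : C1 + C2 + C3 = R / 4)
    (hXY : 0 ≤ A1 + A2 ∧ 0 ≤ C1 + C2)
    (hη : 0 ≤ η) (hη' : η < 9 / 16)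
    (hcone : (B2 + B3) ^ 2 ≤ η * ((A1 + A2) * (C1 + C2)))
    -- |Ric̊|² = 4|B|², where Ric̊ = Ric - (ℛ/4)g is the traceless Ricci tensor
    (hRc0 : (∑ i : Fin 4, ∑ j : Fin 4,
        (Ric i j - (R / 4) * (if i = j then 1 else 0)) ^ 2)
      = 4 * (B1 ^ 2 + B2 ^ 2 + B3 ^ 2)) :
    ∀ v : Fin 4 → ℝ,
      0 ≤ (1 - (4 / 3) * Real.sqrt η) * (R / 4) * (∑ i : Fin 4, (v i) ^ 2) ∧
      (1 - (4 / 3) * Real.sqrt η) * (R / 4) * (∑ i : Fin 4, (v i) ^ 2)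
        ≤ ∑ i : Fin 4, ∑ j : Fin 4, Ric i j * v i * v j := by
  intro v
  set b := Real.sqrt η with hbdef
  have hb0 : 0 ≤ b := Real.sqrt_nonneg η
  have hb2 : b ^ 2 = η := Real.sq_sqrt hη
  have hb34 : b < 3 / 4 := by nlinarith
  set s := ∑ i : Fin 4, (v i) ^ 2 with hs
  have hs0 : 0 ≤ s := Finset.sum_nonneg fun i _ => sq_nonneg _
  set S : Fin 4 → Fin 4 → ℝ :=
    fun i j => Ric i j - (R / 4) * (if i = j then 1 else 0) with hSdef
  set T : ℝ := ∑ i : Fin 4, ∑ j : Fin 4, S i j * (v i * v j) with hT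
  clear_value b s S T
  -- bound on the Frobenius norm squared of S
  have hS2 : (∑ i : Fin 4, ∑ j : Fin 4, (S i j) ^ 2) ≤ η * R ^ 2 / 9 := by
    have hrc : (∑ i : Fin 4, ∑ j : Fin 4, (S i j) ^ 2)
        = 4 * (B1 ^ 2 + B2 ^ 2 + B3 ^ 2) := by
      simp only [hSdef]; exact hRc0
    rw [hrc]
    obtain ⟨hA12, hA23⟩ := hA
    obtain ⟨hC12, hC23⟩ := hC
    obtain ⟨hB1, hB12, hB23⟩ := hB
    obtain ⟨hX, hY⟩ := hXY
    have h1 : B1 ^ 2 + B2 ^ 2 + B3 ^ 2 ≤ (B2 + B3) ^ 2 := by nlinarith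
    have hXle : A1 + A2 ≤ R / 6 := by linarith
    have hYle : C1 + C2 ≤ R / 6 := by linarith
    have h2 : (A1 + A2) * (C1 + C2) ≤ R / 6 * (R / 6) :=
      mul_le_mul hXle hYle hY (by linarith)
    have h3 : η * ((A1 + A2) * (C1 + C2)) ≤ η * (R / 6 * (R / 6)) :=
      mul_le_mul_of_nonneg_left h2 hη
    nlinarith [hcone]
  -- Cauchy–Schwarz: T² ≤ (∑ S²) · s²
  have hCS : T ^ 2 ≤ (∑ i : Fin 4, ∑ j : Fin 4, (S i j) ^ 2) * s ^ 2 := by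
    have key := Finset.sum_mul_sq_le_sq_mul_sq
      (Finset.univ : Finset (Fin 4 × Fin 4))
      (fun p => S p.1 p.2) (fun p => v p.1 * v p.2)
    have e1 : (∑ p : Fin 4 × Fin 4, S p.1 p.2 * (v p.1 * v p.2)) = T := by
      rw [hT, ← Finset.univ_product_univ, Finset.sum_product]
    have e2 : (∑ p : Fin 4 × Fin 4, (S p.1 p.2) ^ 2)
        = ∑ i : Fin 4, ∑ j : Fin 4, (S i j) ^ 2 := by
      rw [← Finset.univ_product_univ, Finset.sum_product]
    have e3 : (∑ p : Fin 4 × Fin 4, (v p.1 * v p.2) ^ 2) = s ^ 2 := by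
      rw [← Finset.univ_product_univ, Finset.sum_product]
      simp_rw [mul_pow]
      rw [hs, sq, Finset.sum_mul_sum]
    rw [e1, e2, e3] at key
    exact key
  have hT2 : T ^ 2 ≤ (b * R / 3) ^ 2 * s ^ 2 := by
    calc T ^ 2 ≤ (∑ i : Fin 4, ∑ j : Fin 4, (S i j) ^ 2) * s ^ 2 := hCS
    _ ≤ (η * R ^ 2 / 9) * s ^ 2 := mul_le_mul_of_nonneg_right hS2 (sq_nonneg s)
    _ = (b * R / 3) ^ 2 * s ^ 2 := by rw [← hb2]; ring
  have hcs0 : 0 ≤ b * R / 3 * s :=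
    mul_nonneg (div_nonneg (mul_nonneg hb0 hRpos) (by norm_num)) hs0
  have hTlb : -(b * R / 3 * s) ≤ T := by
    have h := abs_le_of_sq_le_sq' (a := T) (b := b * R / 3 * s) (le_of_le_of_eq hT2 (by ring)) hcs0
    exact h.1
  have hsplit : (∑ i : Fin 4, ∑ j : Fin 4, Ric i j * v i * v j) = T + R / 4 * s := by
    simp only [hT, hSdef, hs, Fin.sum_univ_four]
    simp only [Fin.isValue, Fin.reduceEq, reduceIte, if_true, if_false]
    ring
  refine ⟨?_, ?_⟩
  · have h1 : (0:ℝ) ≤ 1 - 4 / 3 * b := by linarith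
    exact mul_nonneg (mul_nonneg h1 (by linarith)) hs0
  · rw [hsplit]
    linarith [mul_le_mul_of_nonneg_right (le_of_lt hb34) hs0,
      mul_nonneg hRpos hs0]
end

section
/- Let A₁ ≤ A₂ ≤ A₃, C₁ ≤ C₂ ≤ C₃, 0 ≤ B₁ ≤ B₂ ≤ B₃ be real numbers with A₁+A₂+A₃ = C₁+C₂+C₃, satisfying (B₂+B₃)² ≤ η(A₁+A₂)(C₁+C₂), A₂+A₃ ≤ μ(A₁+A₂), C₂+C₃ ≤ μ(C₁+C₂) for μ-1 ≥ η ≥ 0 and μ > 1. If moreover A₁+A₂ ≤ C₁+C₂, then with Λ := max{μ, √(ημ), μ²} we have A₃ ≤ Λ(A₁+A₂), B₃ ≤ Λ(A₁+A₂), and C₃ ≤ Λ(A₁+A₂). -/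
/-- Uniformly PIC pinching estimate (Lemma 4.6): the cone conditions force
A₃, B₃, C₃ ≤ Λ(A₁+A₂) with Λ = max{μ, √(ημ), μ²}. -/
theorem stmt_9 (A1 A2 A3 C1 C2 C3 B1 B2 B3 η μ : ℝ)
    (hA : A1 ≤ A2 ∧ A2 ≤ A3) (hC : C1 ≤ C2 ∧ C2 ≤ C3)
    (hB : 0 ≤ B1 ∧ B1 ≤ B2 ∧ B2 ≤ B3)
    (htr : A1 + A2 + A3 = C1 + C2 + C3)
    (h1 : (B2 + B3) ^ 2 ≤ η * ((A1 + A2) * (C1 + C2)))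
    (h2 : A2 + A3 ≤ μ * (A1 + A2))
    (h3 : C2 + C3 ≤ μ * (C1 + C2))
    (hη : 0 ≤ η) (hημ : η ≤ μ - 1) (hμ : 1 < μ)
    (hmin : A1 + A2 ≤ C1 + C2) :
    A3 ≤ max (max μ (Real.sqrt (η * μ))) (μ ^ 2) * (A1 + A2) ∧
    B3 ≤ max (max μ (Real.sqrt (η * μ))) (μ ^ 2) * (A1 + A2) ∧
    C3 ≤ max (max μ (Real.sqrt (η * μ))) (μ ^ 2) * (A1 + A2) := by
  obtain ⟨hA12, hA23⟩ := hA
  obtain ⟨hC12, hC23⟩ := hC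
  obtain ⟨hB0, hB12, hB23⟩ := hB
  set Λ := max (max μ (Real.sqrt (η * μ))) (μ ^ 2) with hΛ
  -- C1+C2 ≤ μ(A1+A2)
  have hchain : C1 + C2 ≤ μ * (A1 + A2) := by linarith
  have hpos : 0 ≤ A1 + A2 := by nlinarith
  have hμΛ : μ ≤ Λ := le_max_of_le_left (le_max_left _ _)
  have hμ2Λ : μ ^ 2 ≤ Λ := le_max_right _ _
  have hsΛ : Real.sqrt (η * μ) ≤ Λ := le_max_of_le_left (le_max_right _ _)
  refine ⟨?_, ?_, ?_⟩
  · calc A3 ≤ μ * (A1 + A2) := by nlinarith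
      _ ≤ Λ * (A1 + A2) := by nlinarith
  · have hsq : (B2 + B3) ^ 2 ≤ η * μ * (A1 + A2) ^ 2 := by nlinarith [mul_le_mul_of_nonneg_left hchain (mul_nonneg hη hpos)]
    have hB3 : B2 + B3 ≤ Real.sqrt (η * μ) * (A1 + A2) := by
      have h0 : (0:ℝ) ≤ B2 + B3 := by linarith
      have := Real.sqrt_le_sqrt hsq
      rwa [Real.sqrt_sq h0, Real.sqrt_mul (by positivity), Real.sqrt_sq hpos] at this
    calc B3 ≤ B2 + B3 := by linarith
      _ ≤ Real.sqrt (η * μ) * (A1 + A2) := hB3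
      _ ≤ Λ * (A1 + A2) := by nlinarith
  · calc C3 ≤ μ * (C1 + C2) := by nlinarith
      _ ≤ μ ^ 2 * (A1 + A2) := by nlinarith
      _ ≤ Λ * (A1 + A2) := by nlinarith
end

section
/- For any curvature operator Rm on ℝⁿ (viewed as a symmetric bilinear form on Λ²ℝⁿ satisfying the first Bianchi identity), the sharp product with the identity satisfies Rm # 𝓘 = (1/2) Ric ⧀ id - Rm, where Ric is the Ricci contraction of Rm, ⧀ is the Kulkarni-Nomizu product, and 𝓘 is the identity operator on Λ²ℝⁿ. In particular 𝓘^# = 𝓘#𝓘 = (n-2)𝓘. -/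
open Finset

/-- The sharp product in index form (polarization of
(T^#)_{ijkl} = T_{ipkw}T_{jplw} - T_{jpkw}T_{iplw}). -/
noncomputable def sharpProd {n : ℕ} (M N : Fin n → Fin n → Fin n → Fin n → ℝ)
    (i j k l : Fin n) : ℝ :=
  (1 / 2) * ∑ p : Fin n, ∑ w : Fin n,
    (M i p k w * N j p l w + N i p k w * M j p l w
      - M j p k w * N i p l w - N j p k w * M i p l w)

/-- The identity curvature operator 𝓘 on Λ²ℝⁿ in index form. -/
noncomputable def idOp (n : ℕ) (i j k l : Fin n) : ℝ :=
  (if i = k then 1 else 0) * (if j = l then 1 else 0)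
    - (if i = l then 1 else 0) * (if j = k then 1 else 0)

/-- The Kulkarni–Nomizu product A ⧀ B in index form. -/
def kulkarniNomizu {n : ℕ} (A B : Fin n → Fin n → ℝ) (i j k l : Fin n) : ℝ :=
  A i k * B j l + A j l * B i k - A i l * B j k - A j k * B i l

lemma aux_key {n : ℕ} (M : Fin n → Fin n → Fin n → Fin n → ℝ) (i j k l : Fin n) :
    ∑ p : Fin n, ∑ w : Fin n, M i p k w * idOp n j p l w
      = (if j = l then 1 else 0) * (∑ p : Fin n, M i p k p) - M i l k j := by
  simp only [idOp, mul_sub, mul_ite, ite_mul, mul_one, mul_zero, zero_mul, one_mul,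
    Finset.sum_sub_distrib, Finset.sum_ite_eq, Finset.sum_ite_eq', Finset.mem_univ, if_true,
    Finset.mul_sum]
  rw [Finset.sum_comm]
  simp

lemma aux_key2 {n : ℕ} (M : Fin n → Fin n → Fin n → Fin n → ℝ) (i j k l : Fin n) :
    ∑ p : Fin n, ∑ w : Fin n, idOp n i p k w * M j p l w
      = (if i = k then 1 else 0) * (∑ p : Fin n, M j p l p) - M j k l i := by
  have h : ∀ p w, idOp n i p k w * M j p l w = M j p l w * idOp n i p k w :=
    fun p w => mul_comm _ _
  simp only [h]
  exact aux_key M j i l k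

lemma aux_main {n : ℕ} (M : Fin n → Fin n → Fin n → Fin n → ℝ)
    (hanti1 : ∀ i j k l, M i j k l = -M j i k l)
    (hanti2 : ∀ i j k l, M i j k l = -M i j l k)
    (hpair : ∀ i j k l, M i j k l = M k l i j)
    (hbianchi : ∀ i j k l, M i j k l + M j k i l + M k i j l = 0)
    (i j k l : Fin n) :
    sharpProd M (idOp n) i j k l
      = (1 / 2) * kulkarniNomizu (fun a b => ∑ p : Fin n, M a p b p)
          (fun a b => if a = b then 1 else 0) i j k l
        - M i j k l := by
  have hmain : M i l k j + M j k l i - M j l k i - M i k l j = 2 * M i j k l := by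
    linarith [hpair j k l i, hanti1 l i j k, hanti2 i l j k, hpair j l k i,
      hanti1 k i j l, hanti2 i k j l, hbianchi i k l j, hpair k l i j, hanti1 l i k j]
  unfold sharpProd
  simp only [Finset.sum_add_distrib, Finset.sum_sub_distrib]
  rw [aux_key M i j k l, aux_key2 M i j k l, aux_key M j i k l, aux_key2 M j i k l]
  simp only [kulkarniNomizu]
  linear_combination (-(1 / 2 : ℝ)) * hmain

/-- Böhm–Wilking: Rm # 𝓘 = (1/2) Ric ⧀ id - Rm; in particular 𝓘 # 𝓘 = (n-2)𝓘. -/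
theorem stmt_13 (n : ℕ) (Rm : Fin n → Fin n → Fin n → Fin n → ℝ)
    (hanti1 : ∀ i j k l, Rm i j k l = -Rm j i k l)
    (hanti2 : ∀ i j k l, Rm i j k l = -Rm i j l k)
    (hpair : ∀ i j k l, Rm i j k l = Rm k l i j)
    (hbianchi : ∀ i j k l, Rm i j k l + Rm j k i l + Rm k i j l = 0) :
    (∀ i j k l,
      sharpProd Rm (idOp n) i j k l
        = (1 / 2) * kulkarniNomizu (fun a b => ∑ p : Fin n, Rm a p b p)
            (fun a b => if a = b then 1 else 0) i j k l
          - Rm i j k l) ∧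
    (∀ i j k l, sharpProd (idOp n) (idOp n) i j k l = ((n : ℝ) - 2) * idOp n i j k l) := by
  have ha1 : ∀ i j k l, idOp n i j k l = -idOp n j i k l := by
    intro i j k l; simp only [idOp]; ring
  have ha2 : ∀ i j k l, idOp n i j k l = -idOp n i j l k := by
    intro i j k l; simp only [idOp]; ring
  have hp : ∀ i j k l, idOp n i j k l = idOp n k l i j := by
    intro i j k l; simp only [idOp, eq_comm]; ring
  have hb : ∀ i j k l, idOp n i j k l + idOp n j k i l + idOp n k i j l = 0 := by
    intro i j k l
    simp only [idOp]
    rw [show (if j = i then (1:ℝ) else 0) = (if i = j then 1 else 0) by simp [eq_comm],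
      show (if k = i then (1:ℝ) else 0) = (if i = k then 1 else 0) by simp [eq_comm],
      show (if k = j then (1:ℝ) else 0) = (if j = k then 1 else 0) by simp [eq_comm]]
    ring
  have ric : ∀ a b : Fin n, (∑ p : Fin n, idOp n a p b p)
      = ((n : ℝ) - 1) * (if a = b then 1 else 0) := by
    intro a b
    simp only [idOp, if_pos rfl, mul_one, Finset.sum_sub_distrib, Finset.sum_const,
      Finset.card_univ, Fintype.card_fin, nsmul_eq_mul, mul_ite, ite_mul, one_mul, mul_zero,
      zero_mul]
    rw [Finset.sum_ite_eq' Finset.univ b (fun x => if a = x then (1:ℝ) else 0)]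
    simp only [Finset.mem_univ, if_true]
    split_ifs <;> ring
  refine ⟨aux_main Rm hanti1 hanti2 hpair hbianchi, ?_⟩
  intro i j k l
  rw [aux_main (idOp n) ha1 ha2 hp hb i j k l]
  simp only [kulkarniNomizu]
  rw [ric i k, ric j l, ric i l, ric j k]
  simp only [idOp]
  ring
end
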